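/- arXiv:2108.13789 — 2 statements merged into one kernel-verified Lean document; each statement's English description precedes it below -/
import Mathlib

section
/- Let H be a Hopf *-algebra, B a right H-module *-algebra, and M a right H-equivariant B-*-bimodule. The coboundary map D : U(Cent_B(B⊕M)) → ZS¹_ℓ(H;B,M), defined by Dυ(h) := (υ◁h)·υ*, is a group homomorphism whose image BS¹_ℓ(H;B,M) is contained in the centre of ZS¹_ℓ(H;B,M). -/
open TensorProduct

section ConvolutionFramework

variable {k : Type*} [CommRing k] [StarRing k]
variable {H : Type*} [Ring H] [HopfAlgebra k H] [StarRing H] [StarModule k H]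
variable {B : Type*} [Ring B] [Algebra k B] [StarRing B] [StarModule k B]
variable {M : Type*} [AddCommGroup M] [Module k M] [StarAddMonoid M] [StarModule k M]

/-- The convolution product on `C(H,B) = Hom_k(H,B)`:
`(f ⋆ g)(h) = f(h₍₁₎) g(h₍₂₎)`. -/
noncomputable def conv (f g : H →ₗ[k] B) : H →ₗ[k] B :=
  LinearMap.mul' k B ∘ₗ TensorProduct.map f g ∘ₗ Coalgebra.comul

/-- The convolution unit `ε(·) 1_B`. -/
noncomputable def convOne : H →ₗ[k] B :=
  Algebra.linearMap k B ∘ₗ Coalgebra.counit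

/-- The involution on the convolution bimodule: `f*(h) = (f (S(h)*))*`. -/
noncomputable def convStar (f : H →ₗ[k] M) : H →ₗ[k] M where
  toFun h := star (f (star (HopfAlgebra.antipode (R := k) h)))
  map_add' x y := by simp
  map_smul' r x := by simp [star_smul]

/-- The `star ⊗ star` map on `H ⊗ H` (as an additive map). -/
noncomputable def starTensor : H ⊗[k] H →+ H ⊗[k] H :=
  TensorProduct.liftAddHom
    { toFun := fun x =>
        { toFun := fun y => star x ⊗ₜ[k] star y
          map_zero' := by simp
          map_add' := fun y₁ y₂ => by simp [star_add, TensorProduct.tmul_add] }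
      map_zero' := by ext y; simp
      map_add' := fun x₁ x₂ => by ext y; simp [star_add, TensorProduct.add_tmul] }
    (fun r x y => by
      simp only [AddMonoidHom.coe_mk, ZeroHom.coe_mk, star_smul]
      rw [TensorProduct.smul_tmul])

/-- `H` is a Hopf `*`-algebra: `Δ(h*) = h₍₁₎* ⊗ h₍₂₎*`, `ε(h*) = ε(h)*`, and
`S ∘ * ∘ S ∘ * = id`. -/
def IsHopfStar (k H : Type*) [CommRing k] [StarRing k]
    [Ring H] [HopfAlgebra k H] [StarRing H] [StarModule k H] : Prop :=
  (∀ h : H, Coalgebra.comul (R := k) (star h) = starTensor (Coalgebra.comul (R := k) h)) ∧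
  (∀ h : H, Coalgebra.counit (R := k) (star h) = star (Coalgebra.counit (R := k) h)) ∧
  (∀ h : H, HopfAlgebra.antipode (R := k) (star (HopfAlgebra.antipode (R := k) (star h))) = h)

end ConvolutionFramework

section ModuleAlgebra

/-- A right `H`-module `*`-algebra `B`: a right action `act` of `H` on `B` such that the
multiplication and unit of `B` are `H`-linear in the Hopf sense and the action is
compatible with the `*`-structures. -/
structure RightHopfModuleStarAlgebra (k H B : Type*) [CommRing k] [StarRing k]
    [Ring H] [HopfAlgebra k H] [StarRing H] [StarModule k H]
    [Ring B] [Algebra k B] [StarRing B] [StarModule k B] where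
  act : B →ₗ[k] H →ₗ[k] B
  act_one : ∀ b : B, act b 1 = b
  act_mul : ∀ (b : B) (h h' : H), act b (h * h') = act (act b h) h'
  act_algebra_mul : ∀ b₁ b₂ : B,
    act (b₁ * b₂) = LinearMap.mul' k B ∘ₗ TensorProduct.map (act b₁) (act b₂) ∘ₗ Coalgebra.comul
  act_algebra_one : act 1 = Algebra.linearMap k B ∘ₗ Coalgebra.counit
  act_star : ∀ (b : B) (h : H),
    star (act b h) = act (star b) (star (HopfAlgebra.antipode (R := k) h))

/-- A right `H`-equivariant `B`-`*`-bimodule `M`: commuting left and right `B`-actions,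
a right `H`-action, the `*`-structure compatibilities, and Hopf-equivariance of the
`B`-actions. -/
structure EquivStarBimodule (k H B M : Type*) [CommRing k] [StarRing k]
    [Ring H] [HopfAlgebra k H] [StarRing H] [StarModule k H]
    [Ring B] [Algebra k B] [StarRing B] [StarModule k B]
    [AddCommGroup M] [Module k M] [StarAddMonoid M] [StarModule k M]
    (ρ : RightHopfModuleStarAlgebra k H B) where
  lact : B →ₗ[k] M →ₗ[k] M
  ract : M →ₗ[k] B →ₗ[k] M
  hact : M →ₗ[k] H →ₗ[k] M
  lact_one : ∀ m : M, lact 1 m = m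
  lact_mul : ∀ (b₁ b₂ : B) (m : M), lact (b₁ * b₂) m = lact b₁ (lact b₂ m)
  ract_one : ∀ m : M, ract m 1 = m
  ract_mul : ∀ (m : M) (b₁ b₂ : B), ract m (b₁ * b₂) = ract (ract m b₁) b₂
  middle : ∀ (b₁ : B) (m : M) (b₂ : B), ract (lact b₁ m) b₂ = lact b₁ (ract m b₂)
  star_compat : ∀ (b₁ : B) (m : M) (b₂ : B),
    star (lact b₁ (ract m b₂)) = lact (star b₂) (ract (star m) (star b₁))
  hact_one : ∀ m : M, hact m 1 = m
  hact_mul : ∀ (m : M) (h h' : H), hact m (h * h') = hact (hact m h) h'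
  hact_lact : ∀ (b : B) (m : M), hact (lact b m) =
    TensorProduct.lift lact ∘ₗ TensorProduct.map (ρ.act b) (hact m) ∘ₗ Coalgebra.comul
  hact_ract : ∀ (m : M) (b : B), hact (ract m b) =
    TensorProduct.lift ract ∘ₗ TensorProduct.map (hact m) (ρ.act b) ∘ₗ Coalgebra.comul
  hact_star : ∀ (m : M) (h : H),
    star (hact m h) = hact (star m) (star (HopfAlgebra.antipode (R := k) h))

variable {k H B M : Type*} [CommRing k] [StarRing k]
  [Ring H] [HopfAlgebra k H] [StarRing H] [StarModule k H]
  [Ring B] [Algebra k B] [StarRing B] [StarModule k B]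
  [AddCommGroup M] [Module k M] [StarAddMonoid M] [StarModule k M]
  {ρ : RightHopfModuleStarAlgebra k H B}

/-- The left convolution action of `C(H,B)` on `C(H,M)`: `(f ⋆ μ)(h) = f(h₍₁₎) • μ(h₍₂₎)`. -/
noncomputable def convL (S : EquivStarBimodule k H B M ρ)
    (f : H →ₗ[k] B) (μ : H →ₗ[k] M) : H →ₗ[k] M :=
  TensorProduct.lift S.lact ∘ₗ TensorProduct.map f μ ∘ₗ Coalgebra.comul

/-- The right convolution action of `C(H,B)` on `C(H,M)`: `(μ ⋆ f)(h) = μ(h₍₁₎) • f(h₍₂₎)`. -/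
noncomputable def convR (S : EquivStarBimodule k H B M ρ)
    (μ : H →ₗ[k] M) (f : H →ₗ[k] B) : H →ₗ[k] M :=
  TensorProduct.lift S.ract ∘ₗ TensorProduct.map μ f ∘ₗ Coalgebra.comul

/-- A lazy Sweedler 1-cocycle: a unitary `σ` of `C(H,B)` centralizing
`ρ_B(B) ⊕ ρ_M(M)`, with `σ(1) = 1` and `σ(hk) = (σ(h) ◁ k₍₁₎) σ(k₍₂₎)`. -/
noncomputable def IsLazySweedlerCocycle (S : EquivStarBimodule k H B M ρ)
    (σ : H →ₗ[k] B) : Prop :=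
  conv σ (convStar σ) = convOne ∧
  conv (convStar σ) σ = convOne ∧
  (∀ b : B, conv σ (ρ.act b) = conv (ρ.act b) σ) ∧
  (∀ m : M, convL S σ (S.hact m) = convR S (S.hact m) σ) ∧
  σ 1 = 1 ∧
  (∀ h : H, σ ∘ₗ LinearMap.mulLeft k h =
    LinearMap.mul' k B ∘ₗ TensorProduct.map (ρ.act (σ h)) σ ∘ₗ Coalgebra.comul)

/-- A lazy Hochschild 1-cocycle: a self-adjoint `μ ∈ C(H,M)` centralizing `ρ_B(B)`,
with `μ(1) = 0` and `μ(hk) = μ(h) ◁ k + ε(h) μ(k)`. -/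
noncomputable def IsLazyHochschildCocycle (S : EquivStarBimodule k H B M ρ)
    (μ : H →ₗ[k] M) : Prop :=
  convStar μ = μ ∧
  (∀ b : B, convL S (ρ.act b) μ = convR S μ (ρ.act b)) ∧
  μ 1 = 0 ∧
  (∀ h : H, μ ∘ₗ LinearMap.mulLeft k h = S.hact (μ h) + Coalgebra.counit (R := k) h • μ)

/-- `υ` is a unitary of `Cent_B(B ⊕ M)`: a unitary of `B` commuting with all of `B` and
centralizing `M`. -/
def IsCentralUnitary (S : EquivStarBimodule k H B M ρ) (υ : B) : Prop :=
  υ * star υ = 1 ∧ star υ * υ = 1 ∧ (∀ b : B, υ * b = b * υ) ∧ ∀ m : M, S.lact υ m = S.ract m υ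

/-- The Sweedler coboundary `Dυ(h) := (υ ◁ h) υ*`. -/
noncomputable def sweedlerCobound (ρ : RightHopfModuleStarAlgebra k H B) (υ : B) :
    H →ₗ[k] B :=
  LinearMap.mulRight k (star υ) ∘ₗ ρ.act υ

/-- The Hochschild coboundary `Dm(h) := m ◁ h - ε(h) m`. -/
noncomputable def hochCobound (S : EquivStarBimodule k H B M ρ) (m : M) : H →ₗ[k] M :=
  S.hact m - LinearMap.smulRight (Coalgebra.counit (R := k)) m

/-- An `H`-equivariant `*`-derivation `der : B → M`. -/
def IsEquivStarDerivation (S : EquivStarBimodule k H B M ρ) (der : B →ₗ[k] M) : Prop :=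
  (∀ b₁ b₂ : B, der (b₁ * b₂) = S.ract (der b₁) b₂ + S.lact b₁ (der b₂)) ∧
  (∀ b : B, der (star b) = - star (der b)) ∧
  (∀ (b : B) (h : H), der (ρ.act b h) = S.hact (der b) h)

/-- The Maurer–Cartan cocycle `MC[der](σ)(h) := -derσ(h₍₁₎) • σ*(h₍₂₎)`. -/
noncomputable def mcCocycle (S : EquivStarBimodule k H B M ρ) (der : B →ₗ[k] M)
    (σ : H →ₗ[k] B) : H →ₗ[k] M :=
  - (TensorProduct.lift S.ract ∘ₗ TensorProduct.map (der ∘ₗ σ) (convStar σ) ∘ₗ Coalgebra.comul)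

end ModuleAlgebra

/-!
Since `υ` is central in `B`, right multiplication by `υ*` commutes with convolution on both
sides, and `ρ` turns products in `B` into convolution products. Hence `D(υ₁υ₂) = Dυ₁ ⋆ Dυ₂`
and `D1 = ε`; together with `(Dυ)* = D(υ*)`, which rests on `S ∘ * ∘ S ∘ * = id`, this makes
`Dυ` unitary. The cocycle identity is `ρ(b₁b₂) = ρ(b₁) ⋆ ρ(b₂)` applied to `b₁ = (υ ◁ h) υ*`,
`b₂ = υ`, and laziness as well as centrality of `Dυ` in `ZS¹_ℓ` reduce, after pulling out
`υ*`, to `υ` commuting with `B` and centralizing `M`.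
-/

section Convolution

variable {k H B : Type*} [CommRing k] [Ring H] [HopfAlgebra k H] [Ring B] [Algebra k B]

theorem conv_assoc (f g p : H →ₗ[k] B) : conv (conv f g) p = conv f (conv g p) := by
  have expand_left : TensorProduct.map (conv f g) p
      = (LinearMap.mul' k B).rTensor B ∘ₗ TensorProduct.map (TensorProduct.map f g) p
          ∘ₗ (Coalgebra.comul (R := k) (A := H)).rTensor H := by
    ext x y; simp [conv]
  have expand_right : TensorProduct.map f (conv g p)
      = (LinearMap.mul' k B).lTensor B ∘ₗ TensorProduct.map f (TensorProduct.map g p)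
          ∘ₗ (Coalgebra.comul (R := k) (A := H)).lTensor H := by
    ext x y; simp [conv]
  have mul_assoc_tensor : LinearMap.mul' k B ∘ₗ (LinearMap.mul' k B).rTensor B
        ∘ₗ TensorProduct.map (TensorProduct.map f g) p
      = (LinearMap.mul' k B ∘ₗ (LinearMap.mul' k B).lTensor B
          ∘ₗ TensorProduct.map f (TensorProduct.map g p))
        ∘ₗ (TensorProduct.assoc k H H H).toLinearMap := by
    ext x y z; simp [mul_assoc]
  change LinearMap.mul' k B ∘ₗ TensorProduct.map (conv f g) p ∘ₗ Coalgebra.comul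
    = LinearMap.mul' k B ∘ₗ TensorProduct.map f (conv g p) ∘ₗ Coalgebra.comul
  ext h
  simp only [expand_left, expand_right, LinearMap.comp_apply]
  rw [← Coalgebra.coassoc_apply]
  simpa only [LinearMap.comp_apply, LinearEquiv.coe_coe] using
    LinearMap.congr_fun mul_assoc_tensor ((Coalgebra.comul (R := k) (A := H)).rTensor H
      (Coalgebra.comul h))

theorem conv_mulRight_comp (f g : H →ₗ[k] B) (c : B) :
    conv f (LinearMap.mulRight k c ∘ₗ g) = LinearMap.mulRight k c ∘ₗ conv f g := by
  have h : LinearMap.mul' k B ∘ₗ TensorProduct.map f (LinearMap.mulRight k c ∘ₗ g)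
      = (LinearMap.mulRight k c ∘ₗ LinearMap.mul' k B) ∘ₗ TensorProduct.map f g := by
    ext x y; simp [mul_assoc]
  simp only [conv, ← LinearMap.comp_assoc, h]

theorem mulRight_comp_conv {c : B} (hc : ∀ b : B, c * b = b * c) (f g : H →ₗ[k] B) :
    conv (LinearMap.mulRight k c ∘ₗ f) g = LinearMap.mulRight k c ∘ₗ conv f g := by
  have h : LinearMap.mul' k B ∘ₗ TensorProduct.map (LinearMap.mulRight k c ∘ₗ f) g
      = (LinearMap.mulRight k c ∘ₗ LinearMap.mul' k B) ∘ₗ TensorProduct.map f g := by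
    ext x y
    simp [mul_assoc, ← hc (g y)]
  simp only [conv, ← LinearMap.comp_assoc, h]

end Convolution

theorem star_mul_comm_of_forall_mul_comm {B : Type*} [Mul B] [StarMul B] {υ : B}
    (hυ : ∀ b : B, υ * b = b * υ) (b : B) : star υ * b = b * star υ := by
  simpa using congrArg star (hυ (star b)).symm

section Coboundary

variable {k H B M : Type*} [CommRing k] [StarRing k]
  [Ring H] [HopfAlgebra k H] [StarRing H] [StarModule k H]
  [Ring B] [Algebra k B] [StarRing B] [StarModule k B]
  [AddCommGroup M] [Module k M] [StarAddMonoid M] [StarModule k M]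
  {ρ : RightHopfModuleStarAlgebra k H B}

theorem IsHopfStar.star_antipode_star_antipode (hH : IsHopfStar k H) (h : H) :
    star (HopfAlgebra.antipode (R := k) (star (HopfAlgebra.antipode (R := k) h))) = h := by
  simpa using congrArg star (hH.2.2 (star h))

namespace EquivStarBimodule

variable (S : EquivStarBimodule k H B M ρ)

theorem convL_mulRight_comp {c : B} (hc : ∀ m : M, S.lact c m = S.ract m c)
    (f : H →ₗ[k] B) (μ : H →ₗ[k] M) :
    convL S (LinearMap.mulRight k c ∘ₗ f) μ = S.ract.flip c ∘ₗ convL S f μ := by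
  have h : TensorProduct.lift S.lact ∘ₗ TensorProduct.map (LinearMap.mulRight k c ∘ₗ f) μ
      = (S.ract.flip c ∘ₗ TensorProduct.lift S.lact) ∘ₗ TensorProduct.map f μ := by
    ext x y
    simp [S.lact_mul, hc, S.middle]
  simp only [convL, ← LinearMap.comp_assoc, h]

theorem convR_mulRight_comp (μ : H →ₗ[k] M) (f : H →ₗ[k] B) (c : B) :
    convR S μ (LinearMap.mulRight k c ∘ₗ f) = S.ract.flip c ∘ₗ convR S μ f := by
  have h : TensorProduct.lift S.ract ∘ₗ TensorProduct.map μ (LinearMap.mulRight k c ∘ₗ f)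
      = (S.ract.flip c ∘ₗ TensorProduct.lift S.ract) ∘ₗ TensorProduct.map μ f := by
    ext x y
    simp [S.ract_mul]
  simp only [convR, ← LinearMap.comp_assoc, h]

theorem star_lact (b : B) (m : M) : star (S.lact b m) = S.ract (star m) (star b) := by
  simpa [S.ract_one, S.lact_one] using S.star_compat b m 1

theorem star_ract (m : M) (b : B) : star (S.ract m b) = S.lact (star b) (star m) := by
  simpa [S.ract_one, S.lact_one] using S.star_compat 1 m b

theorem lact_star_eq_ract_star {c : B} (hc : ∀ m : M, S.lact c m = S.ract m c) (m : M) :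
    S.lact (star c) m = S.ract m (star c) := by
  simpa [star_lact, star_ract] using (congrArg star (hc (star m))).symm

end EquivStarBimodule

theorem RightHopfModuleStarAlgebra.act_mul_eq_conv (ρ : RightHopfModuleStarAlgebra k H B)
    (b₁ b₂ : B) : ρ.act (b₁ * b₂) = conv (ρ.act b₁) (ρ.act b₂) :=
  ρ.act_algebra_mul b₁ b₂

theorem sweedlerCobound_one : sweedlerCobound ρ (1 : B) = convOne := by
  rw [sweedlerCobound, star_one, LinearMap.mulRight_one, LinearMap.id_comp, ρ.act_algebra_one,
    convOne]

theorem sweedlerCobound_mul {υ₁ : B} (hυ₁ : ∀ b : B, υ₁ * b = b * υ₁) (υ₂ : B) :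
    sweedlerCobound ρ (υ₁ * υ₂) = conv (sweedlerCobound ρ υ₁) (sweedlerCobound ρ υ₂) := by
  have h_star := star_mul_comm_of_forall_mul_comm hυ₁
  rw [sweedlerCobound, sweedlerCobound, sweedlerCobound, conv_mulRight_comp,
    mulRight_comp_conv h_star, ← ρ.act_mul_eq_conv]
  ext h
  simp [mul_assoc, h_star]

theorem convStar_sweedlerCobound (hH : IsHopfStar k H) {υ : B}
    (hυ : ∀ b : B, υ * b = b * υ) :
    convStar (sweedlerCobound ρ υ) = sweedlerCobound ρ (star υ) := by
  ext h
  change star (ρ.act υ _ * star υ) = ρ.act (star υ) h * star (star υ)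
  rw [star_mul, star_star, ρ.act_star, hH.star_antipode_star_antipode, hυ]

theorem sweedlerCobound_comp_mulLeft {υ : B} (hυ : star υ * υ = 1) (h : H) :
    sweedlerCobound ρ υ ∘ₗ LinearMap.mulLeft k h
      = conv (ρ.act (sweedlerCobound ρ υ h)) (sweedlerCobound ρ υ) := by
  have act_mulLeft : ρ.act υ ∘ₗ LinearMap.mulLeft k h = ρ.act (ρ.act υ h) := by
    ext x
    exact ρ.act_mul υ h x
  change _ = conv (ρ.act (ρ.act υ h * star υ)) (LinearMap.mulRight k (star υ) ∘ₗ ρ.act υ)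
  rw [ρ.act_mul_eq_conv, conv_assoc, conv_mulRight_comp, ← ρ.act_mul_eq_conv, hυ,
    conv_mulRight_comp, ← ρ.act_mul_eq_conv, mul_one, sweedlerCobound, LinearMap.comp_assoc,
    act_mulLeft]

theorem conv_sweedlerCobound_comm {υ : B} (hυ : ∀ b : B, υ * b = b * υ) {σ : H →ₗ[k] B}
    (hσ : conv σ (ρ.act υ) = conv (ρ.act υ) σ) :
    conv σ (sweedlerCobound ρ υ) = conv (sweedlerCobound ρ υ) σ := by
  rw [sweedlerCobound, conv_mulRight_comp,
    mulRight_comp_conv (star_mul_comm_of_forall_mul_comm hυ), hσ]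

theorem convL_sweedlerCobound_hact (S : EquivStarBimodule k H B M ρ) {υ : B}
    (hυ : ∀ m : M, S.lact υ m = S.ract m υ) (m : M) :
    convL S (sweedlerCobound ρ υ) (S.hact m) = convR S (S.hact m) (sweedlerCobound ρ υ) := by
  rw [sweedlerCobound, S.convL_mulRight_comp (S.lact_star_eq_ract_star hυ), S.convR_mulRight_comp,
    convL, convR, ← S.hact_lact, ← S.hact_ract, hυ]

theorem isLazySweedlerCocycle_sweedlerCobound (hH : IsHopfStar k H)
    {S : EquivStarBimodule k H B M ρ} {υ : B} (hυ : IsCentralUnitary S υ) :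
    IsLazySweedlerCocycle S (sweedlerCobound ρ υ) := by
  obtain ⟨h_mul_star, h_star_mul, h_comm, h_lact⟩ := hυ
  have h_star_comm := star_mul_comm_of_forall_mul_comm h_comm
  refine ⟨?_, ?_, fun b => ?_, convL_sweedlerCobound_hact S h_lact, ?_,
    sweedlerCobound_comp_mulLeft h_star_mul⟩
  · rw [convStar_sweedlerCobound hH h_comm, ← sweedlerCobound_mul h_comm, h_mul_star,
      sweedlerCobound_one]
  · rw [convStar_sweedlerCobound hH h_comm, ← sweedlerCobound_mul h_star_comm, h_star_mul,
      sweedlerCobound_one]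
  · refine (conv_sweedlerCobound_comm h_comm ?_).symm
    rw [← ρ.act_mul_eq_conv, ← ρ.act_mul_eq_conv, h_comm]
  · change ρ.act υ 1 * star υ = 1
    rw [ρ.act_one, h_mul_star]

end Coboundary

/-- Let `H` be a Hopf `*`-algebra, `B` a right `H`-module `*`-algebra, and
`M` a right `H`-equivariant `B`-`*`-bimodule.  The coboundary map
`D : U(Cent_B(B ⊕ M)) → ZS¹_ℓ(H;B,M)`, `Dυ(h) := (υ ◁ h) υ*`, is a group homomorphism
whose image is contained in the centre of the group of lazy Sweedler 1-cocycles. -/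
theorem stmt10 {H B M : Type*}
    [Ring H] [HopfAlgebra ℂ H] [StarRing H] [StarModule ℂ H]
    [Ring B] [Algebra ℂ B] [StarRing B] [StarModule ℂ B]
    [AddCommGroup M] [Module ℂ M] [StarAddMonoid M] [StarModule ℂ M]
    (hH : IsHopfStar ℂ H)
    (ρ : RightHopfModuleStarAlgebra ℂ H B)
    (S : EquivStarBimodule ℂ H B M ρ) :
    (∀ υ : B, IsCentralUnitary S υ → IsLazySweedlerCocycle S (sweedlerCobound ρ υ)) ∧
    (∀ υ₁ υ₂ : B, IsCentralUnitary S υ₁ → IsCentralUnitary S υ₂ →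
      sweedlerCobound ρ (υ₁ * υ₂) = conv (sweedlerCobound ρ υ₁) (sweedlerCobound ρ υ₂)) ∧
    (∀ (υ : B) (σ : H →ₗ[ℂ] B), IsCentralUnitary S υ → IsLazySweedlerCocycle S σ →
      conv σ (sweedlerCobound ρ υ) = conv (sweedlerCobound ρ υ) σ) :=
  ⟨fun _ hυ => isLazySweedlerCocycle_sweedlerCobound hH hυ,
    fun _ υ₂ hυ₁ _ => sweedlerCobound_mul hυ₁.2.2.1 υ₂,
    fun υ _ hυ hσ => conv_sweedlerCobound_comm hυ.2.2.1 (hσ.2.2.1 υ)⟩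
end

section
/- Let H = U(𝔤) be the universal enveloping algebra of a real Lie algebra 𝔤, B a right 𝔤-module *-algebra and M a right 𝔤-equivariant B-*-bimodule. Then restriction to 𝔤 gives an ℝ-linear isomorphism from the lazy Hochschild 1-cocycles ZH¹_ℓ(H;M) to the Lie algebra 1-cocycles Z¹(𝔤, Z_B(M)_sa), i.e. maps c : 𝔤 → Z_B(M)_sa with c(X)◁Y − c(Y)◁X − c([X,Y]) = 0; this isomorphism carries the Hochschild coboundaries to the Lie algebra coboundaries. -/
/-!
`U(𝔤)` is generated by the primitive elements `ι X`, on which `ε` vanishes. A map with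
`μ(hk) = μ(h) ◁ k + ε(h) μ(k)` has `μ(1) = 0` and `μ(ι X * h) = μ(ι X) ◁ h`, so it is determined
by its restriction to `𝔤`, and that restriction is a Lie cocycle because `ι ⁅X, Y⁆` is a
commutator. Conversely, a Lie cocycle `c` makes `X • (h, m) = (ι X * h, c X ◁ h)` a representation
of `𝔤` on `H × M`; it extends to `U(𝔤)`, and the `M`-component of the action on `(1, 0)` is a
cocycle extending `c`. Self-adjointness and centrality then propagate from the generators:
`μ ↦ μ*` preserves the cocycle identity because the antipode is an anti-homomorphism, and for a
primitive `x` both convolutions of `μ` with `b ◁ ·` obey a Leibniz rule in `x`.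
-/

open TensorProduct

theorem Algebra.induction_left_of_adjoin_eq_top {R A : Type*} [CommSemiring R] [Semiring A]
    [Algebra R A] {s : Set A} (hs : Algebra.adjoin R s = ⊤) {p : A → Prop} (one : p 1)
    (smul : ∀ (r : R) a, p a → p (r • a)) (add : ∀ a b, p a → p b → p (a + b))
    (mul_left : ∀ x ∈ s, ∀ a, p a → p (x * a)) (a : A) : p a := by
  have ha : a ∈ Submodule.span R (Submonoid.closure s) := by
    rw [← Algebra.adjoin_eq_span, hs]; trivial
  induction ha using Submodule.span_induction with
  | mem x hx =>
    induction hx using Submonoid.closure_induction_left with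
    | one => exact one
    | mul_left x hx y _ ih => exact mul_left x hx y ih
  | zero => simpa using smul 0 1 one
  | add a b _ _ ha hb => exact add a b ha hb
  | smul r a _ ha => exact smul r a ha

theorem UniversalEnvelopingAlgebra.adjoin_range_ι (R L : Type*) [CommRing R] [LieRing L]
    [LieAlgebra R L] :
    Algebra.adjoin R (Set.range (UniversalEnvelopingAlgebra.ι R (L := L))) = ⊤ := by
  refine Algebra.eq_top_iff.2 fun u => ?_
  obtain ⟨t, rfl⟩ : ∃ t, UniversalEnvelopingAlgebra.mkAlgHom R L t = u :=
    RingCon.mkₐ_surjective _ u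
  induction t using TensorAlgebra.induction with
  | algebraMap r => exact Subalgebra.algebraMap_mem _ r
  | ι x => exact Algebra.subset_adjoin ⟨x, rfl⟩
  | mul a b ha hb => rw [map_mul]; exact mul_mem ha hb
  | add a b ha hb => rw [map_add]; exact add_mem ha hb

section Generation

attribute [local instance] LieRing.ofAssociativeRing

variable {k 𝔤 H : Type*} [CommRing k] [LieRing 𝔤] [LieAlgebra k 𝔤] [Ring H] [Algebra k H]
  (φ : UniversalEnvelopingAlgebra k 𝔤 ≃ₐ[k] H) {ι : 𝔤 →ₗ[k] H}

include φ in
theorem map_lie_eq_of_eq_universalEnvelopingAlgebra_ι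
    (hι : ∀ X, ι X = φ (UniversalEnvelopingAlgebra.ι k X)) (X Y : 𝔤) :
    ι ⁅X, Y⁆ = ι X * ι Y - ι Y * ι X := by
  simp only [hι, LieHom.map_lie, Ring.lie_def, map_sub, map_mul]

include φ in
theorem adjoin_range_eq_top_of_eq_universalEnvelopingAlgebra_ι
    (hι : ∀ X, ι X = φ (UniversalEnvelopingAlgebra.ι k X)) :
    Algebra.adjoin k (Set.range ι) = ⊤ := by
  have : Set.range ι = φ.toAlgHom '' Set.range (UniversalEnvelopingAlgebra.ι k) := by
    rw [← Set.range_comp]; exact congrArg Set.range (funext hι)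
  rw [this, Algebra.adjoin_image, UniversalEnvelopingAlgebra.adjoin_range_ι, Algebra.map_top,
    AlgHom.range_eq_top]
  exact φ.surjective

end Generation

section HochschildCocycle

open Coalgebra

variable {k H B M : Type*} [CommRing k] [StarRing k]
  [Ring H] [HopfAlgebra k H] [StarRing H] [StarModule k H]
  [Ring B] [Algebra k B] [StarRing B] [StarModule k B]
  [AddCommGroup M] [Module k M] [StarAddMonoid M] [StarModule k M]
  {ρ : RightHopfModuleStarAlgebra k H B} (S : EquivStarBimodule k H B M ρ)

theorem convStar_apply (f : H →ₗ[k] M) (h : H) :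
    convStar f h = star (f (star (HopfAlgebra.antipode k h))) :=
  rfl

def IsHochschildCocycle (μ : H →ₗ[k] M) : Prop :=
  ∀ h h' : H, μ (h * h') = S.hact (μ h) h' + counit (R := k) h • μ h'

variable {S}

theorem isHochschildCocycle_iff {μ : H →ₗ[k] M} :
    IsHochschildCocycle S μ ↔
      ∀ h : H, μ ∘ₗ LinearMap.mulLeft k h = S.hact (μ h) + counit (R := k) h • μ := by
  simp only [IsHochschildCocycle, LinearMap.ext_iff, LinearMap.comp_apply,
    LinearMap.mulLeft_apply, LinearMap.add_apply, LinearMap.smul_apply]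

namespace IsHochschildCocycle

variable {μ ν : H →ₗ[k] M} {s : Set H}

theorem map_one (hμ : IsHochschildCocycle S μ) : μ 1 = 0 := by
  simpa [S.hact_one] using hμ 1 1

theorem comp_mulLeft {x : H} (hμ : IsHochschildCocycle S μ) (hx : counit (R := k) x = 0) :
    μ ∘ₗ LinearMap.mulLeft k x = S.hact (μ x) := by
  rw [isHochschildCocycle_iff.1 hμ x, hx, zero_smul, add_zero]

theorem ext (hs : Algebra.adjoin k s = ⊤) (hμ : IsHochschildCocycle S μ)
    (hν : IsHochschildCocycle S ν) (h : ∀ x ∈ s, μ x = ν x) : μ = ν := by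
  ext a
  induction a using Algebra.induction_left_of_adjoin_eq_top hs with
  | one => rw [hμ.map_one, hν.map_one]
  | smul r a ha => rw [map_smul, map_smul, ha]
  | add a b ha hb => rw [map_add, map_add, ha, hb]
  | mul_left x hx a ha => rw [hμ, hν, h x hx, ha]

theorem convStar (hH : IsHopfStar k H) (hμ : IsHochschildCocycle S μ) :
    IsHochschildCocycle S (convStar μ) := by
  intro h h'
  have hS : star (HopfAlgebra.antipode k (star (HopfAlgebra.antipode k h'))) = h' := by
    simpa using congrArg star (hH.2.2 (star h'))
  have hε : star (counit (R := k) (star (HopfAlgebra.antipode k h))) = counit (R := k) h := by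
    rw [hH.2.1, star_star, HopfAlgebra.counit_antipode]
  simp only [convStar_apply, HopfAlgebra.antipode_mul_antidistrib, star_mul, hμ _ _, star_add,
    S.hact_star, hS, star_smul, hε]

theorem convStar_eq_self (hs : Algebra.adjoin k s = ⊤) (hH : IsHopfStar k H)
    (hμ : IsHochschildCocycle S μ)
    (hstar : ∀ x ∈ s, star (HopfAlgebra.antipode k x) = x)
    (hsa : ∀ x ∈ s, star (μ x) = μ x) : _root_.convStar μ = μ :=
  (hμ.convStar hH).ext hs hμ fun x hx => by
    rw [convStar_apply, hstar x hx, hsa x hx]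

theorem of_mul_left (hs : Algebra.adjoin k s = ⊤) (hε : ∀ x ∈ s, counit (R := k) x = 0)
    (h1 : μ 1 = 0) (hmul : ∀ x ∈ s, ∀ h, μ (x * h) = S.hact (μ x) h) :
    IsHochschildCocycle S μ := by
  intro h h'
  induction h using Algebra.induction_left_of_adjoin_eq_top hs with
  | one => simp [h1]
  | smul r a ha => simp only [smul_mul_assoc, map_smul, ha, LinearMap.smul_apply, smul_add,
      smul_smul, smul_eq_mul]
  | add a b ha hb => simp only [add_mul, map_add, ha, hb, LinearMap.add_apply, add_smul]; abel
  | mul_left x hx a _ =>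
    rw [mul_assoc, hmul x hx, hmul x hx, S.hact_mul, Bialgebra.counit_mul, hε x hx, zero_mul,
      zero_smul, add_zero]

end IsHochschildCocycle

theorem RightHopfModuleStarAlgebra.act_comp_mulLeft (b : B) (x : H) :
    ρ.act b ∘ₗ LinearMap.mulLeft k x = ρ.act (ρ.act b x) :=
  LinearMap.ext fun h => ρ.act_mul b x h

theorem convL_act_hact (b : B) (m : M) : convL S (ρ.act b) (S.hact m) = S.hact (S.lact b m) :=
  (S.hact_lact b m).symm

theorem convR_hact_act (m : M) (b : B) : convR S (S.hact m) (ρ.act b) = S.hact (S.ract m b) :=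
  (S.hact_ract m b).symm

theorem convL_apply_of_comul_eq {x : H} (hx : comul (R := k) x = x ⊗ₜ 1 + 1 ⊗ₜ x)
    (f : H →ₗ[k] B) (μ : H →ₗ[k] M) : convL S f μ x = S.lact (f x) (μ 1) + S.lact (f 1) (μ x) := by
  simp [convL, hx]

theorem convR_apply_of_comul_eq {x : H} (hx : comul (R := k) x = x ⊗ₜ 1 + 1 ⊗ₜ x)
    (μ : H →ₗ[k] M) (f : H →ₗ[k] B) : convR S μ f x = S.ract (μ x) (f 1) + S.ract (μ 1) (f x) := by
  simp [convR, hx]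

theorem convL_comp_mulLeft_of_comul_eq {x : H} (hx : comul (R := k) x = x ⊗ₜ 1 + 1 ⊗ₜ x)
    (f : H →ₗ[k] B) (μ : H →ₗ[k] M) :
    convL S f μ ∘ₗ LinearMap.mulLeft k x =
      convL S (f ∘ₗ LinearMap.mulLeft k x) μ + convL S f (μ ∘ₗ LinearMap.mulLeft k x) := by
  ext h
  simp only [convL, LinearMap.comp_apply, LinearMap.mulLeft_apply, LinearMap.add_apply,
    Bialgebra.comul_mul, hx]
  induction comul (R := k) h using TensorProduct.induction_on with
  | zero => simp
  | tmul a b => simp [add_mul, Algebra.TensorProduct.tmul_mul_tmul]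
  | add t t' ht ht' => simp only [mul_add, map_add, ht, ht']; abel

theorem convR_comp_mulLeft_of_comul_eq {x : H} (hx : comul (R := k) x = x ⊗ₜ 1 + 1 ⊗ₜ x)
    (μ : H →ₗ[k] M) (f : H →ₗ[k] B) :
    convR S μ f ∘ₗ LinearMap.mulLeft k x =
      convR S (μ ∘ₗ LinearMap.mulLeft k x) f + convR S μ (f ∘ₗ LinearMap.mulLeft k x) := by
  ext h
  simp only [convR, LinearMap.comp_apply, LinearMap.mulLeft_apply, LinearMap.add_apply,
    Bialgebra.comul_mul, hx]
  induction comul (R := k) h using TensorProduct.induction_on with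
  | zero => simp
  | tmul a b => simp [add_mul, Algebra.TensorProduct.tmul_mul_tmul]
  | add t t' ht ht' => simp only [mul_add, map_add, ht, ht']; abel

theorem IsHochschildCocycle.convL_act_eq_convR_act {μ : H →ₗ[k] M} {s : Set H}
    (hs : Algebra.adjoin k s = ⊤) (hprim : ∀ x ∈ s, comul (R := k) x = x ⊗ₜ 1 + 1 ⊗ₜ x)
    (hε : ∀ x ∈ s, counit (R := k) x = 0) (hμ : IsHochschildCocycle S μ)
    (hcent : ∀ x ∈ s, ∀ b, S.lact b (μ x) = S.ract (μ x) b) (b : B) :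
    convL S (ρ.act b) μ = convR S μ (ρ.act b) := by
  ext h
  induction h using Algebra.induction_left_of_adjoin_eq_top hs generalizing b with
  | one => simp [convL, convR, Algebra.TensorProduct.one_def, hμ.map_one]
  | smul r a ha => rw [map_smul, map_smul, ha]
  | add a a' ha ha' => rw [map_add, map_add, ha, ha']
  | mul_left x hx a ha =>
    have hL := LinearMap.congr_fun (convL_comp_mulLeft_of_comul_eq (S := S) (hprim x hx)
      (ρ.act b) μ) a
    have hR := LinearMap.congr_fun (convR_comp_mulLeft_of_comul_eq (S := S) (hprim x hx)
      μ (ρ.act b)) a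
    simp only [LinearMap.comp_apply, LinearMap.mulLeft_apply, LinearMap.add_apply,
      ρ.act_comp_mulLeft, hμ.comp_mulLeft (hε x hx)] at hL hR
    rw [hL, hR, ha, convL_act_hact, convR_hact_act, hcent x hx, add_comm]

end HochschildCocycle

section Extension

open Coalgebra

attribute [local instance] LieRing.ofAssociativeRing

variable {k 𝔤 H B M : Type*} [CommRing k] [StarRing k] [LieRing 𝔤] [LieAlgebra k 𝔤]
  [Ring H] [HopfAlgebra k H] [StarRing H] [StarModule k H]
  [Ring B] [Algebra k B] [StarRing B] [StarModule k B]
  [AddCommGroup M] [Module k M] [StarAddMonoid M] [StarModule k M]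
  {ρ : RightHopfModuleStarAlgebra k H B} (S : EquivStarBimodule k H B M ρ)

noncomputable def extensionRep (ι : 𝔤 →ₗ[k] H)
    (hbr : ∀ X Y : 𝔤, ι ⁅X, Y⁆ = ι X * ι Y - ι Y * ι X)
    (c : 𝔤 →ₗ[k] M) (hc : ∀ X Y : 𝔤, c ⁅X, Y⁆ = S.hact (c X) (ι Y) - S.hact (c Y) (ι X)) :
    𝔤 →ₗ⁅k⁆ Module.End k (H × M) where
  toFun X := (LinearMap.mulLeft k (ι X) ∘ₗ LinearMap.fst k H M).prod
    (S.hact (c X) ∘ₗ LinearMap.fst k H M)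
  map_add' X Y := by ext <;> simp [add_mul]
  map_smul' r X := by ext <;> simp
  map_lie' {X Y} := by ext <;> simp [hbr, hc, Ring.lie_def, S.hact_mul, sub_mul, mul_assoc]

theorem exists_isHochschildCocycle_comp_eq (φ : UniversalEnvelopingAlgebra k 𝔤 ≃ₐ[k] H)
    {ι : 𝔤 →ₗ[k] H} (hι : ∀ X, ι X = φ (UniversalEnvelopingAlgebra.ι k X))
    (hε : ∀ X, counit (R := k) (ι X) = 0) (c : 𝔤 →ₗ[k] M)
    (hc : ∀ X Y : 𝔤, c ⁅X, Y⁆ = S.hact (c X) (ι Y) - S.hact (c Y) (ι X)) :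
    ∃ μ : H →ₗ[k] M, IsHochschildCocycle S μ ∧ μ ∘ₗ ι = c := by
  have hs := adjoin_range_eq_top_of_eq_universalEnvelopingAlgebra_ι φ hι
  let rep := extensionRep S ι (map_lie_eq_of_eq_universalEnvelopingAlgebra_ι φ hι) c hc
  let E : H →ₐ[k] Module.End k (H × M) :=
    (UniversalEnvelopingAlgebra.lift k rep).comp φ.symm.toAlgHom
  have hEι : ∀ X, E (ι X) = rep X := by simp [E, hι]
  have hfst : ∀ h v, (E h v).1 = h * v.1 := by
    intro h v
    induction h using Algebra.induction_left_of_adjoin_eq_top hs generalizing v with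
    | one => simp
    | smul r a ha => simp [ha]
    | add a b ha hb => simp [ha, hb, add_mul]
    | mul_left x hx a ha =>
      obtain ⟨X, rfl⟩ := hx
      simp [hEι, rep, extensionRep, ha, mul_assoc]
  let μ : H →ₗ[k] M := LinearMap.snd k H M ∘ₗ LinearMap.applyₗ ((1 : H), (0 : M)) ∘ₗ E.toLinearMap
  have hmul : ∀ X h, μ (ι X * h) = S.hact (c X) h := by
    intro X h
    simp [μ, hEι, rep, extensionRep, hfst]
  have hμι : ∀ X, μ (ι X) = c X := fun X => by simpa [S.hact_one] using hmul X 1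
  refine ⟨μ, .of_mul_left hs (Set.forall_mem_range.2 hε) (by simp [μ]) ?_, LinearMap.ext hμι⟩
  exact Set.forall_mem_range.2 fun X h => by rw [hmul, hμι]

end Extension

section UEA

variable {𝔤 H B M : Type*} [LieRing 𝔤] [LieAlgebra ℝ 𝔤]
  [Ring H] [HopfAlgebra ℝ H] [StarRing H] [StarModule ℝ H]
  [Ring B] [Algebra ℝ B] [StarRing B] [StarModule ℝ B]
  [AddCommGroup M] [Module ℝ M] [StarAddMonoid M] [StarModule ℝ M]

/-- A Lie algebra 1-cocycle `c : 𝔤 → Z_B(M)_sa`: an `ℝ`-linear map valued in the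
self-adjoint centre of `M` over `B`, with `c(X) ◁ Y - c(Y) ◁ X - c ⁅X,Y⁆ = 0`
(the `𝔤`-action on `M` being `m ◁ X := m ◁ ι X`). -/
def IsLieCocycle {ρ : RightHopfModuleStarAlgebra ℝ H B}
    (S : EquivStarBimodule ℝ H B M ρ) (ι : 𝔤 →ₗ[ℝ] H) (c : 𝔤 →ₗ[ℝ] M) : Prop :=
  (∀ X : 𝔤, star (c X) = c X ∧ ∀ b : B, S.lact b (c X) = S.ract (c X) b) ∧
  (∀ X Y : 𝔤, S.hact (c X) (ι Y) - S.hact (c Y) (ι X) - c ⁅X, Y⁆ = 0)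

theorem IsLazyHochschildCocycle.isLieCocycle_comp {ρ : RightHopfModuleStarAlgebra ℝ H B}
    {S : EquivStarBimodule ℝ H B M ρ} {ι : 𝔤 →ₗ[ℝ] H}
    (hbr : ∀ X Y : 𝔤, ι ⁅X, Y⁆ = ι X * ι Y - ι Y * ι X)
    (hprim : ∀ X : 𝔤, Coalgebra.comul (R := ℝ) (ι X) = ι X ⊗ₜ[ℝ] 1 + 1 ⊗ₜ[ℝ] ι X)
    (hcounit : ∀ X : 𝔤, Coalgebra.counit (R := ℝ) (ι X) = 0)
    (hstar : ∀ X : 𝔤, star (HopfAlgebra.antipode ℝ (ι X)) = ι X)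
    {μ : H →ₗ[ℝ] M} (hμ : IsLazyHochschildCocycle S μ) : IsLieCocycle S ι (μ ∘ₗ ι) := by
  obtain ⟨hsa, hcent, h1, hcoc⟩ := hμ
  refine ⟨fun X => ⟨?_, fun b => ?_⟩, fun X Y => ?_⟩
  · simpa [convStar_apply, hstar] using LinearMap.congr_fun hsa (ι X)
  · simpa [convL_apply_of_comul_eq (hprim X), convR_apply_of_comul_eq (hprim X), h1,
      ρ.act_one] using LinearMap.congr_fun (hcent b) (ι X)
  · simp [hbr, isHochschildCocycle_iff.2 hcoc _ _, hcounit]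

theorem exists_isLazyHochschildCocycle_comp_eq {ρ : RightHopfModuleStarAlgebra ℝ H B}
    {S : EquivStarBimodule ℝ H B M ρ} (hH : IsHopfStar ℝ H)
    (φ : UniversalEnvelopingAlgebra ℝ 𝔤 ≃ₐ[ℝ] H) {ι : 𝔤 →ₗ[ℝ] H}
    (hι : ∀ X : 𝔤, ι X = φ (UniversalEnvelopingAlgebra.ι ℝ X))
    (hprim : ∀ X : 𝔤, Coalgebra.comul (R := ℝ) (ι X) = ι X ⊗ₜ[ℝ] 1 + 1 ⊗ₜ[ℝ] ι X)
    (hcounit : ∀ X : 𝔤, Coalgebra.counit (R := ℝ) (ι X) = 0)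
    (hstar : ∀ X : 𝔤, star (HopfAlgebra.antipode ℝ (ι X)) = ι X)
    {c : 𝔤 →ₗ[ℝ] M} (hc : IsLieCocycle S ι c) :
    ∃ μ : H →ₗ[ℝ] M, IsLazyHochschildCocycle S μ ∧ μ ∘ₗ ι = c := by
  obtain ⟨hcZ, hcoc⟩ := hc
  obtain ⟨μ, hμ, rfl⟩ := exists_isHochschildCocycle_comp_eq S φ hι hcounit c
    fun X Y => (sub_eq_zero.1 (hcoc X Y)).symm
  have hs := adjoin_range_eq_top_of_eq_universalEnvelopingAlgebra_ι φ hι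
  refine ⟨μ, ⟨?_, fun b => ?_, hμ.map_one, isHochschildCocycle_iff.1 hμ⟩, rfl⟩
  · exact hμ.convStar_eq_self hs hH (Set.forall_mem_range.2 hstar)
      (Set.forall_mem_range.2 fun X => (hcZ X).1)
  · exact hμ.convL_act_eq_convR_act hs (Set.forall_mem_range.2 hprim)
      (Set.forall_mem_range.2 hcounit) (Set.forall_mem_range.2 fun X => (hcZ X).2) b

/-- Let `H = U(𝔤)` be the universal enveloping algebra of a real Lie
algebra `𝔤` — a Hopf `*`-algebra in which `𝔤` is primitive with `ι X` skew-adjoint —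
let `B` be a right `𝔤`-module `*`-algebra and `M` a right `𝔤`-equivariant
`B`-`*`-bimodule.  Then restriction to `𝔤` gives an `ℝ`-linear isomorphism from the lazy
Hochschild 1-cocycles `ZH¹_ℓ(H;M)` onto the Lie algebra 1-cocycles `Z¹(𝔤, Z_B(M)_sa)`,
carrying the Hochschild coboundaries to the Lie algebra coboundaries `m ↦ (X ↦ m ◁ X)`. -/
theorem stmt14
    (hH : IsHopfStar ℝ H)
    (φ : UniversalEnvelopingAlgebra ℝ 𝔤 ≃ₐ[ℝ] H)
    (ι : 𝔤 →ₗ[ℝ] H)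
    (hι : ∀ X : 𝔤, ι X = φ (UniversalEnvelopingAlgebra.ι ℝ X))
    (hprim : ∀ X : 𝔤, Coalgebra.comul (R := ℝ) (ι X) = ι X ⊗ₜ[ℝ] 1 + 1 ⊗ₜ[ℝ] ι X)
    (hcounit : ∀ X : 𝔤, Coalgebra.counit (R := ℝ) (ι X) = 0)
    (hantipode : ∀ X : 𝔤, HopfAlgebra.antipode (R := ℝ) (ι X) = - ι X)
    (hstar : ∀ X : 𝔤, star (ι X) = - ι X)
    (ρ : RightHopfModuleStarAlgebra ℝ H B)
    (S : EquivStarBimodule ℝ H B M ρ) :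
    -- restriction lands in the Lie algebra cocycles
    (∀ μ : H →ₗ[ℝ] M, IsLazyHochschildCocycle S μ → IsLieCocycle S ι (μ ∘ₗ ι)) ∧
    -- restriction is ℝ-linear
    (∀ (μ ν : H →ₗ[ℝ] M) (s t : ℝ),
      (s • μ + t • ν) ∘ₗ ι = s • (μ ∘ₗ ι) + t • (ν ∘ₗ ι)) ∧
    -- restriction is injective on the lazy Hochschild 1-cocycles
    (∀ μ ν : H →ₗ[ℝ] M, IsLazyHochschildCocycle S μ → IsLazyHochschildCocycle S ν →
      μ ∘ₗ ι = ν ∘ₗ ι → μ = ν) ∧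
    -- restriction is surjective onto the Lie algebra 1-cocycles
    (∀ c : 𝔤 →ₗ[ℝ] M, IsLieCocycle S ι c →
      ∃ μ : H →ₗ[ℝ] M, IsLazyHochschildCocycle S μ ∧ μ ∘ₗ ι = c) ∧
    -- restriction carries Hochschild coboundaries to Lie algebra coboundaries
    (∀ m : M, star m = m → (∀ b : B, S.lact b m = S.ract m b) →
      hochCobound S m ∘ₗ ι = S.hact m ∘ₗ ι) := by
  have hs := adjoin_range_eq_top_of_eq_universalEnvelopingAlgebra_ι φ hι
  have hstar' : ∀ X : 𝔤, star (HopfAlgebra.antipode ℝ (ι X)) = ι X := fun X => by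
    rw [hantipode, star_neg, hstar, neg_neg]
  refine ⟨fun μ hμ => hμ.isLieCocycle_comp (map_lie_eq_of_eq_universalEnvelopingAlgebra_ι φ hι)
      hprim hcounit hstar', fun μ ν s t => ?_, fun μ ν hμ hν hμν => ?_,
    fun c hc => exists_isLazyHochschildCocycle_comp_eq hH φ hι hprim hcounit hstar' hc,
    fun m _ _ => ?_⟩
  · rw [LinearMap.add_comp, LinearMap.smul_comp, LinearMap.smul_comp]
  · exact (isHochschildCocycle_iff.2 hμ.2.2.2).ext hs (isHochschildCocycle_iff.2 hν.2.2.2)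
      (Set.forall_mem_range.2 (LinearMap.congr_fun hμν))
  · ext X
    simp [hochCobound, hcounit]

end UEA
end
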